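/- For every continuous real-valued potential q on [0,1], the set of negative Dirichlet eigenvalues of q, i.e. {λ ∈ ℝ : λ < 0 and λ is a Dirichlet eigenvalue of q}, is finite. -/

import Mathlib

/-!
For `lam ≤ 0` the energy identity `∫ ψ'² = ∫ (lam - q) ψ²` bounds the Dirichlet energy of an
`L²`-normalized eigenfunction by `C ≥ -min q`, so by Cauchy–Schwarz all normalized eigenfunctions
with nonpositive eigenvalue satisfy `|ψ x - ψ y| ≤ √(C |x - y|)` and `|ψ| ≤ √C`. By Arzelà–Ascoli,
among infinitely many of them two are uniformly within distance `1`; but eigenfunctions of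
distinct eigenvalues are `L²`-orthogonal (their Wronskian has derivative `(mu - lam) ψ φ`), so
any two are at `L²`-distance `√2`.
-/

/-- `lam` is a Dirichlet eigenvalue of `q` on `[0,1]`: there is a nontrivial C²
solution of `-ψ'' + q ψ = lam ψ` with `ψ 0 = ψ 1 = 0`. -/
def IsDirichletEigenvalue (q : ℝ → ℝ) (lam : ℝ) : Prop :=
  ∃ ψ ψ' : ℝ → ℝ,
    (∀ x ∈ Set.Icc (0:ℝ) 1, HasDerivAt ψ (ψ' x) x) ∧
    (∀ x ∈ Set.Icc (0:ℝ) 1, HasDerivAt ψ' (q x * ψ x - lam * ψ x) x) ∧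
    (∃ x ∈ Set.Icc (0:ℝ) 1, ψ x ≠ 0) ∧ ψ 0 = 0 ∧ ψ 1 = 0

open Set Filter Topology intervalIntegral BoundedContinuousFunction
open MeasureTheory (volume)

theorem sq_sub_le_mul_integral_deriv_sq {f f' : ℝ → ℝ} {a b : ℝ} (hab : a ≤ b)
    (hf : ∀ x ∈ Icc a b, HasDerivAt f (f' x) x) (hf' : ContinuousOn f' (Icc a b)) :
    (f b - f a) ^ 2 ≤ (b - a) * ∫ x in a..b, f' x ^ 2 := by
  set D := f b - f a
  have hf'_int : IntervalIntegrable f' volume a b := hf'.intervalIntegrable_of_Icc hab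
  have hf'_sq_int : IntervalIntegrable (f' · ^ 2) volume a b :=
    (hf'.pow 2).intervalIntegrable_of_Icc hab
  have hD : ∫ x in a..b, f' x = D := integral_eq_sub_of_hasDerivAt (by rwa [uIcc_of_le hab]) hf'_int
  -- Cauchy–Schwarz, in the form "the variance of `(b - a) f'` is nonnegative"
  have hvar : ∫ x in a..b, ((b - a) * f' x - D) ^ 2
      = (b - a) * ((b - a) * (∫ x in a..b, f' x ^ 2) - D ^ 2) := by
    calc ∫ x in a..b, ((b - a) * f' x - D) ^ 2
        = ∫ x in a..b, ((b - a) ^ 2 * f' x ^ 2 - 2 * (b - a) * D * f' x + D ^ 2) :=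
          integral_congr fun x _ => by ring
      _ = _ := by
          rw [integral_add ((hf'_sq_int.const_mul _).sub (hf'_int.const_mul _))
              intervalIntegrable_const, integral_sub (hf'_sq_int.const_mul _)
              (hf'_int.const_mul _), integral_const_mul, integral_const_mul, integral_const, hD,
            smul_eq_mul]
          ring
  have hnonneg : 0 ≤ ∫ x in a..b, ((b - a) * f' x - D) ^ 2 :=
    integral_nonneg hab fun _ _ => sq_nonneg _
  rcases hab.eq_or_lt with rfl | hlt
  · simp [D]
  · rw [hvar] at hnonneg
    exact sub_nonneg.1 ((mul_nonneg_iff_of_pos_left (sub_pos.2 hlt)).1 hnonneg)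

theorem BoundedContinuousFunction.exists_ne_dist_lt_of_continuity_modulus {α β : Type*}
    [PseudoMetricSpace α] [CompactSpace α] [MetricSpace β] {s : Set β} (hs : IsCompact s)
    (F : ℕ → α →ᵇ β) (hFs : ∀ n x, F n x ∈ s) (b : ℝ → ℝ) (hb : Tendsto b (𝓝 0) (𝓝 0))
    (hF : ∀ n x y, dist (F n x) (F n y) ≤ b (dist x y)) {ε : ℝ} (hε : 0 < ε) :
    ∃ n m, n ≠ m ∧ dist (F n) (F m) < ε := by
  have hcompact : IsCompact (closure (range F)) :=
    arzela_ascoli s hs (range F) (by rintro _ x ⟨n, rfl⟩; exact hFs n x)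
      (Metric.equicontinuous_of_continuity_modulus b hb _ <| by
        rintro x y ⟨_, n, rfl⟩
        exact hF n x y)
  obtain ⟨_, _, φ, hφ, hlim⟩ :=
    hcompact.tendsto_subseq fun n => subset_closure (mem_range_self n)
  obtain ⟨N, hN⟩ := Metric.cauchySeq_iff'.1 hlim.cauchySeq ε hε
  exact ⟨φ (N + 1), φ N, (hφ N.lt_succ_self).ne', hN (N + 1) N.le_succ⟩

theorem two_le_sq_mul_of_orthonormal {f g : ℝ → ℝ} {a b r : ℝ} (hab : a ≤ b)
    (hf : ContinuousOn f (Icc a b)) (hg : ContinuousOn g (Icc a b))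
    (hff : ∫ x in a..b, f x ^ 2 = 1) (hgg : ∫ x in a..b, g x ^ 2 = 1)
    (hfg : ∫ x in a..b, f x * g x = 0) (hr : ∀ x ∈ Icc a b, |f x - g x| ≤ r) :
    2 ≤ r ^ 2 * (b - a) := by
  have hf_int : IntervalIntegrable (f · ^ 2) volume a b := (hf.pow 2).intervalIntegrable_of_Icc hab
  have hg_int : IntervalIntegrable (g · ^ 2) volume a b := (hg.pow 2).intervalIntegrable_of_Icc hab
  have hfg_int : IntervalIntegrable (fun x => f x * g x) volume a b :=
    (hf.mul hg).intervalIntegrable_of_Icc hab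
  calc (2 : ℝ) = ∫ x in a..b, (f x - g x) ^ 2 := by
        rw [integral_congr (g := fun x => f x ^ 2 + g x ^ 2 - 2 * (f x * g x)) fun x _ => by ring,
          integral_sub (hf_int.add hg_int) (hfg_int.const_mul 2), integral_add hf_int hg_int,
          integral_const_mul, hff, hgg, hfg]
        norm_num
    _ ≤ ∫ _ in a..b, r ^ 2 :=
        integral_mono_on hab (((hf.sub hg).pow 2).intervalIntegrable_of_Icc hab)
          intervalIntegrable_const fun x hx =>
            sq_le_sq' (abs_le.1 (hr x hx)).1 (abs_le.1 (hr x hx)).2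
    _ = r ^ 2 * (b - a) := by rw [integral_const, smul_eq_mul, mul_comm]

structure IsDirichletSolution (q : ℝ → ℝ) (lam : ℝ) (ψ ψ' : ℝ → ℝ) : Prop where
  hasDerivAt : ∀ x ∈ Icc (0:ℝ) 1, HasDerivAt ψ (ψ' x) x
  hasDerivAt_deriv : ∀ x ∈ Icc (0:ℝ) 1, HasDerivAt ψ' (q x * ψ x - lam * ψ x) x
  left : ψ 0 = 0
  right : ψ 1 = 0

namespace IsDirichletSolution

variable {q ψ ψ' φ φ' : ℝ → ℝ} {lam mu Q : ℝ}

theorem continuousOn (h : IsDirichletSolution q lam ψ ψ') : ContinuousOn ψ (Icc 0 1) :=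
  fun x hx => (h.hasDerivAt x hx).continuousAt.continuousWithinAt

theorem continuousOn_deriv (h : IsDirichletSolution q lam ψ ψ') : ContinuousOn ψ' (Icc 0 1) :=
  fun x hx => (h.hasDerivAt_deriv x hx).continuousAt.continuousWithinAt

theorem const_mul (h : IsDirichletSolution q lam ψ ψ') (c : ℝ) :
    IsDirichletSolution q lam (fun x => c * ψ x) (fun x => c * ψ' x) where
  hasDerivAt x hx := (h.hasDerivAt x hx).const_mul c
  hasDerivAt_deriv x hx := ((h.hasDerivAt_deriv x hx).const_mul c).congr_deriv (by ring)
  left := by simp [h.left]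
  right := by simp [h.right]

theorem integral_deriv_sq (h : IsDirichletSolution q lam ψ ψ') (hq : ContinuousOn q (Icc 0 1)) :
    ∫ x in (0:ℝ)..1, ψ' x ^ 2 = ∫ x in (0:ℝ)..1, (lam - q x) * ψ x ^ 2 := by
  have hψ := h.continuousOn
  have hψ' := h.continuousOn_deriv
  have hibp :
      ∫ x in (0:ℝ)..1, (ψ' x ^ 2 - (lam - q x) * ψ x ^ 2) = ψ 1 * ψ' 1 - ψ 0 * ψ' 0 := by
    refine integral_eq_sub_of_hasDerivAt (f := fun x => ψ x * ψ' x) (fun x hx => ?_) ?_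
    · rw [uIcc_of_le zero_le_one] at hx
      exact ((h.hasDerivAt x hx).mul (h.hasDerivAt_deriv x hx)).congr_deriv (by ring)
    · exact ContinuousOn.intervalIntegrable_of_Icc zero_le_one (by fun_prop)
  simp only [h.left, h.right, zero_mul, sub_zero] at hibp
  rwa [integral_sub (ContinuousOn.intervalIntegrable_of_Icc zero_le_one (by fun_prop))
    (ContinuousOn.intervalIntegrable_of_Icc zero_le_one (by fun_prop)), sub_eq_zero] at hibp

theorem integral_mul_eq_zero (h : IsDirichletSolution q lam ψ ψ')
    (h' : IsDirichletSolution q mu φ φ') (hne : lam ≠ mu) :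
    ∫ x in (0:ℝ)..1, ψ x * φ x = 0 := by
  have hψ := h.continuousOn
  have hφ := h'.continuousOn
  have hwronskian : ∫ x in (0:ℝ)..1, (mu - lam) * (ψ x * φ x)
      = (ψ' 1 * φ 1 - ψ 1 * φ' 1) - (ψ' 0 * φ 0 - ψ 0 * φ' 0) := by
    refine integral_eq_sub_of_hasDerivAt (f := fun x => ψ' x * φ x - ψ x * φ' x)
      (fun x hx => ?_) ?_
    · rw [uIcc_of_le zero_le_one] at hx
      exact (((h.hasDerivAt_deriv x hx).mul (h'.hasDerivAt x hx)).sub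
        ((h.hasDerivAt x hx).mul (h'.hasDerivAt_deriv x hx))).congr_deriv (by ring)
    · exact ContinuousOn.intervalIntegrable_of_Icc zero_le_one (by fun_prop)
  rw [h.left, h.right, h'.left, h'.right, integral_const_mul] at hwronskian
  simpa [sub_eq_zero, hne.symm] using hwronskian

theorem integral_deriv_sq_le (h : IsDirichletSolution q lam ψ ψ') (hq : ContinuousOn q (Icc 0 1))
    (hlam : lam ≤ 0) (hQ : ∀ x ∈ Icc (0:ℝ) 1, -Q ≤ q x) :
    ∫ x in (0:ℝ)..1, ψ' x ^ 2 ≤ Q * ∫ x in (0:ℝ)..1, ψ x ^ 2 := by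
  have hψ := h.continuousOn
  rw [h.integral_deriv_sq hq, ← integral_const_mul]
  refine integral_mono_on zero_le_one
    (ContinuousOn.intervalIntegrable_of_Icc zero_le_one (by fun_prop))
    (ContinuousOn.intervalIntegrable_of_Icc zero_le_one (by fun_prop)) fun x hx => ?_
  nlinarith [hQ x hx, sq_nonneg (ψ x)]

theorem dist_le_sqrt (h : IsDirichletSolution q lam ψ ψ')
    (henergy : ∫ x in (0:ℝ)..1, ψ' x ^ 2 ≤ Q) {x y : ℝ} (hx : x ∈ Icc (0:ℝ) 1)
    (hy : y ∈ Icc (0:ℝ) 1) : dist (ψ x) (ψ y) ≤ √(Q * dist x y) := by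
  wlog hyx : y ≤ x generalizing x y
  · rw [dist_comm, dist_comm x]
    exact this hy hx (le_of_not_ge hyx)
  have hsub : Icc y x ⊆ Icc 0 1 := Icc_subset_Icc hy.1 hx.2
  have hψ' := h.continuousOn_deriv
  have hlocal : ∫ t in y..x, ψ' t ^ 2 ≤ ∫ t in (0:ℝ)..1, ψ' t ^ 2 :=
    integral_mono_interval hy.1 hyx hx.2 (Eventually.of_forall fun _ => sq_nonneg _)
      ((hψ'.pow 2).intervalIntegrable_of_Icc zero_le_one)
  have hsq := sq_sub_le_mul_integral_deriv_sq hyx (fun t ht => h.hasDerivAt t (hsub ht))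
    (hψ'.mono hsub)
  rw [Real.dist_eq, Real.dist_eq, abs_of_nonneg (sub_nonneg.2 hyx), mul_comm Q]
  exact Real.abs_le_sqrt
    (hsq.trans (mul_le_mul_of_nonneg_left (hlocal.trans henergy) (sub_nonneg.2 hyx)))

theorem abs_le_sqrt (h : IsDirichletSolution q lam ψ ψ') (henergy : ∫ x in (0:ℝ)..1, ψ' x ^ 2 ≤ Q)
    (hQ : 0 ≤ Q) {x : ℝ} (hx : x ∈ Icc (0:ℝ) 1) : |ψ x| ≤ √Q := by
  have h0 := h.dist_le_sqrt henergy hx ⟨le_rfl, zero_le_one⟩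
  rw [h.left, Real.dist_eq, sub_zero, Real.dist_eq, sub_zero, abs_of_nonneg hx.1] at h0
  exact h0.trans (Real.sqrt_le_sqrt (mul_le_of_le_one_right hQ hx.2))

end IsDirichletSolution

theorem IsDirichletEigenvalue.exists_normalized {q : ℝ → ℝ} {lam : ℝ}
    (h : IsDirichletEigenvalue q lam) :
    ∃ ψ ψ', IsDirichletSolution q lam ψ ψ' ∧ ∫ x in (0:ℝ)..1, ψ x ^ 2 = 1 := by
  obtain ⟨ψ, ψ', hderiv, hderiv', ⟨x₀, hx₀, hψx₀⟩, hleft, hright⟩ := h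
  have hsol : IsDirichletSolution q lam ψ ψ' := ⟨hderiv, hderiv', hleft, hright⟩
  have hpos : 0 < ∫ x in (0:ℝ)..1, ψ x ^ 2 :=
    integral_pos zero_lt_one (hsol.continuousOn.pow 2) (fun _ _ => sq_nonneg _)
      ⟨x₀, hx₀, by positivity⟩
  refine ⟨_, _, hsol.const_mul (√(∫ x in (0:ℝ)..1, ψ x ^ 2))⁻¹, ?_⟩
  simp_rw [mul_pow]
  rw [integral_const_mul, inv_pow, Real.sq_sqrt hpos.le, inv_mul_cancel₀ hpos.ne']

/-- a continuous potential on `[0,1]` has only finitely many negative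
Dirichlet eigenvalues. -/
theorem finitely_many_negative_dirichlet_eigenvalues
    (q : ℝ → ℝ) (hq : ContinuousOn q (Set.Icc 0 1)) :
    {lam : ℝ | lam < 0 ∧ IsDirichletEigenvalue q lam}.Finite := by
  by_contra hinfinite
  obtain ⟨C, hC⟩ := isCompact_Icc.exists_bound_of_continuousOn hq
  have hqC : ∀ x ∈ Icc (0:ℝ) 1, -C ≤ q x := fun x hx => neg_le_of_abs_le (hC x hx)
  have hC0 : 0 ≤ C := (norm_nonneg _).trans (hC 0 ⟨le_rfl, zero_le_one⟩)
  let e := Set.Infinite.natEmbedding _ hinfinite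
  have he : ∀ n, (e n : ℝ) < 0 ∧ IsDirichletEigenvalue q (e n) := fun n => (e n).2
  choose ψ ψ' hsol hnorm using fun n => (he n).2.exists_normalized
  have henergy : ∀ n, ∫ x in (0:ℝ)..1, ψ' n x ^ 2 ≤ C := fun n => by
    simpa [hnorm n] using (hsol n).integral_deriv_sq_le hq (he n).1.le hqC
  let F : ℕ → Icc (0:ℝ) 1 →ᵇ ℝ := fun n =>
    mkOfCompact ⟨(Icc 0 1).domRestrict (ψ n), (hsol n).continuousOn.domRestrict⟩
  obtain ⟨n, m, hnm, hclose⟩ := exists_ne_dist_lt_of_continuity_modulus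
    (isCompact_closedBall 0 √C) F
    (fun n x => mem_closedBall_zero_iff.2 ((hsol n).abs_le_sqrt (henergy n) hC0 x.2))
    (fun t => √(C * t)) (by simpa using ((continuous_const_mul C).sqrt).tendsto 0)
    (fun n x y => (hsol n).dist_le_sqrt (henergy n) x.2 y.2) one_pos
  have horth := (hsol n).integral_mul_eq_zero (hsol m) fun h => hnm (e.injective (Subtype.ext h))
  have := two_le_sq_mul_of_orthonormal zero_le_one (hsol n).continuousOn (hsol m).continuousOn
    (hnorm n) (hnorm m) horth fun x hx => dist_coe_le_dist (f := F n) (g := F m) ⟨x, hx⟩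
  nlinarith [dist_nonneg (x := F n) (y := F m)]
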